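/- arXiv:1904.08635 — 2 statements merged into one kernel-verified Lean document; each statement's English description precedes it below -/
import Mathlib

section
/- For 0 < α, |β| < 1, and r a positive integer, the quantity S(r,α,β) = ∑_{k=0}^∞ (1/k!)(α+βk)^{k+r} e^{-(α+βk)} satisfies the recursion S(r,α,β) = α·S(r-1,α,β) + β·S(r,α+β,β). -/
open Real Filter
open Topology

noncomputable def pb (β α : ℝ) (k : ℕ) : ℝ :=
  (1 - β) * (α + β * k) ^ k * Real.exp (-(α + β * k)) / (Nat.factorial k)

noncomputable def S (r : ℕ) (α β : ℝ) : ℝ :=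
  ∑' k : ℕ, (α + β * k) ^ (k + r) * Real.exp (-(α + β * k)) / (Nat.factorial k)

noncomputable def P (n : ℕ) (β : ℝ) (f : ℝ → ℝ) (x : ℝ) : ℝ :=
  ∑' k : ℕ, pb β (n * x) k * f (k / n)

/-- The general term of the series `S`. -/
noncomputable def Tm (β α' : ℝ) (r : ℕ) (k : ℕ) : ℝ :=
  (α' + β * k) ^ (k + r) * Real.exp (-(α' + β * k)) / (Nat.factorial k)

lemma tendsto_one_add_div (c : ℝ) : Tendsto (fun k : ℕ => 1 + c / (k : ℝ)) atTop (𝓝 1) := by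
  have h : Tendsto (fun k : ℕ => c / (k : ℝ)) atTop (𝓝 0) := by
    have := (tendsto_inv_atTop_zero.comp (tendsto_natCast_atTop_atTop (R := ℝ))).const_mul c
    simpa [Function.comp, div_eq_mul_inv] using this
  simpa using tendsto_const_nhds.add h

/-- Eventually, `|α' + β k| ≥ 1` (in particular nonzero). -/
lemma eventually_abs_ge {β : ℝ} (hβ : β ≠ 0) (α' : ℝ) :
    ∀ᶠ k : ℕ in atTop, 1 ≤ |α' + β * k| := by
  have h : Tendsto (fun k : ℕ => |β| * (k : ℝ) - |α'|) atTop atTop := by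
    apply tendsto_atTop_add_const_right
    exact (tendsto_natCast_atTop_atTop (R := ℝ)).const_mul_atTop (abs_pos.mpr hβ)
  filter_upwards [h.eventually_ge_atTop 1] with k hk
  have h2 : |β * (k : ℝ)| ≤ |α' + β * k| + |α'| := by
    calc |β * (k : ℝ)| = |(α' + β * k) + (-α')| := by ring_nf
    _ ≤ |α' + β * k| + |(-α')| := abs_add_le _ _
    _ = |α' + β * k| + |α'| := by rw [abs_neg]
  have h3 : |β * (k : ℝ)| = |β| * k := by
    rw [abs_mul, Nat.abs_cast]
  linarith

/-- The key formula for the absolute value of the term. -/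
lemma norm_Tm_eventually_eq {β : ℝ} (hβ : β ≠ 0) (α' : ℝ) (r : ℕ) :
    ∀ᶠ k : ℕ in atTop, |Tm β α' r k| =
      (|β| * Real.exp (1 - β)) ^ k * (1 + (α' / β) / k) ^ k * |α' + β * k| ^ r
        * Real.exp (-α') / (Stirling.stirlingSeq k * Real.sqrt (2 * k)) := by
  have hpos := (tendsto_one_add_div (α' / β)).eventually_const_lt zero_lt_one
  filter_upwards [eventually_ge_atTop 1, hpos] with k hk1 hu
  have hk0 : (0 : ℝ) < (k : ℝ) := by exact_mod_cast hk1
  have hu0 : (0 : ℝ) < 1 + (α' / β) / k := by linarith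
  have habs : |α' + β * k| = |β| * k * (1 + (α' / β) / k) := by
    have h1 : α' + β * k = β * k * (1 + (α' / β) / k) := by
      field_simp
      ring
    rw [h1, abs_mul, abs_mul, Nat.abs_cast, abs_of_pos hu0]
  have hfac : (Nat.factorial k : ℝ) =
      Stirling.stirlingSeq k * (Real.sqrt (2 * k) * ((k : ℝ) / Real.exp 1) ^ k) := by
    have h2 : Real.sqrt (2 * k) * ((k : ℝ) / Real.exp 1) ^ k ≠ 0 := by positivity
    rw [Stirling.stirlingSeq, div_mul_cancel₀ _ h2]
  have hexp : Real.exp (-(α' + β * k)) = Real.exp (-α') * Real.exp (-β) ^ k := by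
    have h3 : -(α' + β * (k : ℝ)) = -α' + (k : ℝ) * (-β) := by ring
    rw [h3, Real.exp_add, Real.exp_nat_mul]
  have hexp1 : Real.exp (1 - β) = Real.exp 1 * Real.exp (-β) := by
    rw [← Real.exp_add]
    congr 1
  have habsT : |Tm β α' r k| =
      |α' + β * k| ^ (k + r) * Real.exp (-(α' + β * k)) / (Nat.factorial k) := by
    rw [Tm, abs_div, abs_mul, abs_pow, abs_of_pos (Real.exp_pos _), Nat.abs_cast]
  have hst : 0 < Stirling.stirlingSeq k := by
    obtain ⟨m, rfl⟩ := Nat.exists_eq_succ_of_ne_zero (Nat.one_le_iff_ne_zero.mp hk1)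
    exact Stirling.stirlingSeq'_pos m
  have hsq : 0 < Real.sqrt (2 * k) := Real.sqrt_pos.mpr (by positivity)
  have main : ∀ bb K u A Ea Eb E1 st sq : ℝ, K ≠ 0 → E1 ≠ 0 → st ≠ 0 → sq ≠ 0 → Eb ≠ 0 →
      (bb * K * u) ^ k * A * (Ea * Eb ^ k) / (st * (sq * (K / E1) ^ k)) =
        (bb * (E1 * Eb)) ^ k * u ^ k * A * Ea / (st * sq) := by
    intro bb K u A Ea Eb E1 st sq hK hE1 hst' hsq' hEb
    rw [div_pow, mul_pow (bb * K) u, mul_pow bb K, mul_pow bb (E1 * Eb), mul_pow E1 Eb]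
    field_simp
  rw [habsT, pow_add, habs, hexp, hfac, hexp1]
  exact main _ _ _ _ _ _ _ _ _ hk0.ne' (Real.exp_ne_zero 1) hst.ne' hsq.ne' (Real.exp_ne_zero _)

lemma summable_Tm {β : ℝ} (hβ : β ≠ 0) (hL : |β| * Real.exp (1 - β) < 1) (α' : ℝ) (r : ℕ) :
    Summable (Tm β α' r) := by
  set L := |β| * Real.exp (1 - β) with hLdef
  have hL0 : 0 ≤ L := by positivity
  set c := α' / β with hcdef
  obtain ⟨a, ha, hsta⟩ := Stirling.stirlingSeq'_bounded_by_pos_constant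
  set M := |α'| + |β| with hMdef
  have hM : 0 < M := by positivity
  set D := (Real.exp c + 1) * M ^ r * Real.exp (-α') / a with hDdef
  apply Summable.of_norm_bounded_eventually_nat (g := fun k => D * ((k : ℝ) ^ r * L ^ k))
  · exact (summable_pow_mul_geometric_of_norm_lt_one r
      (by rwa [Real.norm_eq_abs, abs_of_nonneg hL0])).mul_left D
  · have hub := (Real.tendsto_one_add_div_pow_exp c).eventually_le_const
      (lt_add_of_pos_right _ one_pos)
    filter_upwards [norm_Tm_eventually_eq hβ α' r, hub, eventually_ge_atTop 1,
      (tendsto_one_add_div c).eventually_const_lt zero_lt_one] with k heq hub1 hk1 hu0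
    have hk0 : (1 : ℝ) ≤ (k : ℝ) := by exact_mod_cast hk1
    obtain ⟨m, hm⟩ := Nat.exists_eq_succ_of_ne_zero (Nat.one_le_iff_ne_zero.mp hk1)
    have hst : a ≤ Stirling.stirlingSeq k := hm ▸ hsta m
    have hstpos : 0 < Stirling.stirlingSeq k := hm ▸ Stirling.stirlingSeq'_pos m
    have hsq : 1 ≤ Real.sqrt (2 * k) := by
      rw [show (1:ℝ) = Real.sqrt 1 by simp]
      exact Real.sqrt_le_sqrt (by linarith)
    have hA : |α' + β * k| ^ r ≤ M ^ r * (k : ℝ) ^ r := by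
      rw [← mul_pow]
      apply pow_le_pow_left₀ (abs_nonneg _)
      calc |α' + β * k| ≤ |α'| + |β * k| := abs_add_le _ _
        _ = |α'| + |β| * k := by rw [abs_mul, Nat.abs_cast]
        _ ≤ |α'| * k + |β| * k := by nlinarith [abs_nonneg α']
        _ = M * k := by ring
    rw [Real.norm_eq_abs, heq, ← hcdef, ← hLdef]
    calc L ^ k * (1 + c / k) ^ k * |α' + β * k| ^ r * Real.exp (-α')
          / (Stirling.stirlingSeq k * Real.sqrt (2 * k))
        ≤ L ^ k * (Real.exp c + 1) * (M ^ r * (k : ℝ) ^ r) * Real.exp (-α') / (a * 1) := by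
          gcongr
      _ = D * ((k : ℝ) ^ r * L ^ k) := by
          rw [hDdef]; field_simp

lemma not_summable_Tm {β : ℝ} (hβ : β ≠ 0) (hL : 1 ≤ |β| * Real.exp (1 - β)) (α' : ℝ) (r : ℕ) :
    ¬ Summable (Tm β α' r) := by
  intro hsum
  set c := α' / β with hcdef
  set C := Real.exp c * Real.exp (-α') / (2 * Stirling.stirlingSeq 1 * Real.sqrt 2) with hCdef
  have hst1 : 0 < Stirling.stirlingSeq 1 := Stirling.stirlingSeq'_pos 0
  have hC : 0 < C := by
    rw [hCdef]; positivity
  have hlow := (Real.tendsto_one_add_div_pow_exp c).eventually_const_lt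
    (half_lt_self (Real.exp_pos c))
  have hsum2 : Summable (fun k : ℕ => C / Real.sqrt k) := by
    apply Summable.of_norm_bounded_eventually_nat (g := fun k => |Tm β α' r k|) hsum.abs
    filter_upwards [norm_Tm_eventually_eq hβ α' r, hlow, eventually_ge_atTop 1,
      eventually_abs_ge hβ α'] with k heq hlow1 hk1 hA1
    have hupos : (0:ℝ) ≤ (1 + c / k) ^ k := le_trans (by positivity) hlow1.le
    have hk0 : (0 : ℝ) < (k : ℝ) := by exact_mod_cast Nat.lt_of_lt_of_le Nat.zero_lt_one hk1
    obtain ⟨m, hm⟩ := Nat.exists_eq_succ_of_ne_zero (Nat.one_le_iff_ne_zero.mp hk1)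
    have hst : Stirling.stirlingSeq k ≤ Stirling.stirlingSeq 1 := by
      rw [hm]
      exact Stirling.stirlingSeq'_antitone (Nat.zero_le m)
    have hstpos : 0 < Stirling.stirlingSeq k := hm ▸ Stirling.stirlingSeq'_pos m
    have hsqk : 0 < Real.sqrt k := Real.sqrt_pos.mpr hk0
    have hsq : Real.sqrt (2 * k) = Real.sqrt 2 * Real.sqrt k := Real.sqrt_mul (by norm_num) _
    have hAr : (1 : ℝ) ≤ |α' + β * k| ^ r := one_le_pow₀ hA1
    have hLr : (1 : ℝ) ≤ (|β| * Real.exp (1 - β)) ^ k := one_le_pow₀ hL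
    rw [Real.norm_eq_abs, abs_of_nonneg (by positivity), heq, ← hcdef, hsq]
    calc C / Real.sqrt k
        = 1 * (Real.exp c / 2) * 1 * Real.exp (-α')
          / (Stirling.stirlingSeq 1 * (Real.sqrt 2 * Real.sqrt k)) := by
          rw [hCdef]; field_simp
      _ ≤ (|β| * Real.exp (1 - β)) ^ k * (1 + c / k) ^ k * |α' + β * k| ^ r * Real.exp (-α')
          / (Stirling.stirlingSeq k * (Real.sqrt 2 * Real.sqrt k)) := by
          gcongr
  have hsum3 : Summable (fun k : ℕ => 1 / (k : ℝ) ^ ((1 : ℝ) / 2)) := by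
    have h4 := hsum2.mul_left C⁻¹
    apply h4.congr
    intro k
    rw [← Real.sqrt_eq_rpow]
    field_simp [hC.ne']
  have := Real.summable_one_div_nat_rpow.mp hsum3
  norm_num at this

lemma S_eq_tsum_Tm (r : ℕ) (α' β : ℝ) : S r α' β = ∑' k : ℕ, Tm β α' r k := rfl

theorem stmt1 (α β : ℝ) (hα : 0 < α) (hβ : |β| < 1) (r : ℕ) (hr : 1 ≤ r) :
    S r α β = α * S (r - 1) α β + β * S r (α + β) β := by
  obtain ⟨s, rfl⟩ : ∃ s, r = s + 1 := ⟨r - 1, (Nat.succ_pred_eq_of_pos hr).symm⟩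
  have hs1 : s + 1 - 1 = s := rfl
  rw [hs1]
  by_cases hβ0 : β = 0
  · subst hβ0
    rw [S_eq_tsum_Tm, S_eq_tsum_Tm, S_eq_tsum_Tm]
    have h1 : ∀ k : ℕ, Tm 0 α (s + 1) k = α * Tm 0 α s k := by
      intro k
      simp only [Tm, zero_mul, add_zero, ← add_assoc, pow_succ]
      ring
    rw [tsum_congr h1, tsum_mul_left]
    ring
  -- pointwise identity
  have hpt : ∀ k : ℕ, Tm β α (s + 1) k =
      α * Tm β α s k + β * (Nat.casesOn k 0 (fun n => Tm β (α + β) (s + 1) n) : ℝ) := by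
    intro k
    cases k with
    | zero =>
      show Tm β α (s + 1) 0 = α * Tm β α s 0 + β * 0
      simp only [Tm, Nat.cast_zero, mul_zero, add_zero, Nat.factorial_zero, Nat.cast_one,
        zero_add, pow_succ]
      ring
    | succ n =>
      have hfk : ((n + 1).factorial : ℝ) = (n + 1) * (n.factorial : ℝ) := by
        rw [Nat.factorial_succ]; push_cast; ring
      have hx : (α + β) + β * (n : ℝ) = α + β * ((n : ℝ) + 1) := by ring
      have he1 : n + 1 + (s + 1) = (n + 1 + s) + 1 := by omega
      have he2 : n + (s + 1) = n + 1 + s := by omega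
      simp only [Tm, hfk, hx, he1, he2, Nat.cast_succ]
      have hn0 : ((n : ℝ) + 1) ≠ 0 := by positivity
      have hf0 : (n.factorial : ℝ) ≠ 0 := by positivity
      rw [pow_succ]
      field_simp
  by_cases hL : |β| * Real.exp (1 - β) < 1
  · -- everything summable
    have h1 := summable_Tm hβ0 hL α (s + 1)
    have h0 := summable_Tm hβ0 hL α s
    have h1' := summable_Tm hβ0 hL (α + β) (s + 1)
    set g : ℕ → ℝ := fun k => (Nat.casesOn k 0 (fun n => Tm β (α + β) (s + 1) n) : ℝ) with hgdef
    have hg : Summable g := by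
      apply (summable_nat_add_iff 1).mp
      exact h1'
    rw [S_eq_tsum_Tm, S_eq_tsum_Tm, S_eq_tsum_Tm]
    calc (∑' k : ℕ, Tm β α (s + 1) k) = ∑' k : ℕ, (α * Tm β α s k + β * g k) :=
          tsum_congr hpt
      _ = (∑' k : ℕ, α * Tm β α s k) + ∑' k : ℕ, β * g k :=
          Summable.tsum_add (h0.mul_left α) (hg.mul_left β)
      _ = α * (∑' k : ℕ, Tm β α s k) + β * ∑' k : ℕ, g k := by
          rw [tsum_mul_left, tsum_mul_left]
      _ = α * (∑' k : ℕ, Tm β α s k) + β * ∑' k : ℕ, Tm β (α + β) (s + 1) k := by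
          rw [Summable.tsum_eq_zero_add hg]
          have hg0 : g 0 = 0 := rfl
          rw [hg0, zero_add]
  · -- nothing summable
    push_neg at hL
    have h1 := not_summable_Tm hβ0 hL α (s + 1)
    have h0 := not_summable_Tm hβ0 hL α s
    have h1' := not_summable_Tm hβ0 hL (α + β) (s + 1)
    rw [S_eq_tsum_Tm, S_eq_tsum_Tm, S_eq_tsum_Tm,
      tsum_eq_zero_of_not_summable h1, tsum_eq_zero_of_not_summable h0,
      tsum_eq_zero_of_not_summable h1']
    ring
end

section
/- For 0 < α, |β| < 1, and r ≥ 1 an integer, S(r,α,β) = ∑_{k=0}^∞ β^k (α + kβ) S(r-1, α+kβ, β). -/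
open Real Filter

lemma tele (α β : ℝ) (n : ℕ) :
    ∑ k ∈ Finset.range (n+1), β^k * (α + k*β) * (α + n*β)^(n-k) / (Nat.factorial (n-k))
      = (α + n*β)^(n+1) / Nat.factorial n := by
  set f : ℕ → ℝ := fun k => β^k * (α + n*β)^(n+1-k) / (Nat.factorial (n-k)) with hf
  have key : ∀ k < n, β^k * (α + k*β) * (α + n*β)^(n-k) / (Nat.factorial (n-k))
      = f k - f (k+1) := by
    intro k hk
    obtain ⟨m, hm⟩ : ∃ m, n = k + m + 1 := ⟨n - k - 1, by omega⟩
    subst hm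
    have h1 : k + m + 1 - k = m + 1 := by omega
    have h2 : k + m + 1 - (k+1) = m := by omega
    have h3 : k + m + 1 + 1 - k = m + 2 := by omega
    have h4 : k + m + 1 + 1 - (k+1) = m + 1 := by omega
    simp only [hf, h1, h2, h3, h4]
    have hcast : ((k + m + 1 : ℕ) : ℝ) = (k:ℝ) + m + 1 := by push_cast; ring
    rw [hcast, Nat.factorial_succ m]
    have hfm : (Nat.factorial m : ℝ) ≠ 0 := Nat.cast_ne_zero.2 (Nat.factorial_ne_zero m)
    field_simp
    push_cast
    ring
  rw [Finset.sum_range_succ, Finset.sum_congr rfl (fun k hk => key k (Finset.mem_range.1 hk)),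
    Finset.sum_range_sub' f n]
  simp only [hf]
  simp [Nat.sub_self, pow_zero]


lemma notSummable {β : ℝ} (hβ : β < 0) (hq : 1 ≤ (-β) * Real.exp (1 - β)) (a : ℝ) (m : ℕ) :
    ¬ Summable (fun j : ℕ => (a + β*j)^(j+m) * Real.exp (-(a+β*j)) / Nat.factorial j) := by
  intro h
  have habs := summable_abs_iff.2 h
  set B : ℝ := -β with hBdef
  have hB : 0 < B := by simp [hBdef]; linarith
  set c : ℝ := |a| with hcdef
  have hc : 0 ≤ c := abs_nonneg a
  set L : ℝ := Real.exp (-(c/B)) with hLdef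
  have hL : 0 < L := Real.exp_pos _
  have hq1 : 1 ≤ B * Real.exp (1 + B) := by
    have : 1 - β = 1 + B := by rw [hBdef]; ring
    rw [← this]; exact hq
  -- eventual facts
  have hE1 : ∀ᶠ j : ℕ in atTop, Stirling.stirlingSeq j ≤ 2 := by
    have hlt : Real.sqrt π < 2 := by
      nlinarith [Real.sq_sqrt Real.pi_nonneg, Real.sqrt_nonneg π, Real.pi_lt_d2]
    exact (Stirling.tendsto_stirlingSeq_sqrt_pi.eventually_lt_const hlt).mono
      (fun x hx => hx.le)
  have hE2 : ∀ᶠ j : ℕ in atTop, L/2 < (1 - (c/B)/j)^j := by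
    have := (Real.tendsto_one_add_div_pow_exp (-(c/B))).eventually_const_lt (by linarith : L/2 < L)
    refine this.mono (fun j hj => ?_)
    rw [show (1:ℝ) - c/B/j = 1 + -(c/B)/j by ring]
    exact hj
  have hE3 : ∀ᶠ j : ℕ in atTop, c + 1 ≤ B * j := by
    have ht : Tendsto (fun j : ℕ => B * (j:ℝ)) atTop atTop :=
      Tendsto.const_mul_atTop hB tendsto_natCast_atTop_atTop
    exact ht.eventually_ge_atTop (c+1)
  obtain ⟨N, hN⟩ := eventually_atTop.1 (((eventually_ge_atTop 1).and hE1).and (hE2.and hE3))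
  set K : ℝ := L * Real.exp (-c) / 8 with hKdef
  have hK : 0 < K := by positivity
  -- main lower bound
  have hlow : ∀ j ≥ N, K / j ≤ |(a + β*j)^(j+m) * Real.exp (-(a+β*j)) / Nat.factorial j| := by
    intro j hj
    obtain ⟨⟨hj1, hst⟩, hLj, hcB⟩ := hN j hj
    have hjR : (1:ℝ) ≤ (j:ℝ) := by exact_mod_cast hj1
    have hjpos : (0:ℝ) < j := by linarith
    have hj0 : (j:ℝ) ≠ 0 := ne_of_gt hjpos
    have hBjc : 1 ≤ B * j - c := by linarith
    have hac : a ≤ c := le_abs_self a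
    have hneg : a + β * j < 0 := by
      have : β * j = -(B * j) := by rw [hBdef]; ring
      rw [this]; linarith
    have habsx : |a + β * j| = B * j - a := by
      rw [abs_of_neg hneg, hBdef]; ring
    have hfact : (Nat.factorial j : ℝ) ≤ 4 * j * ((j:ℝ)/Real.exp 1)^j := by
      have hden : 0 < Real.sqrt (2*j) * ((j:ℝ)/Real.exp 1)^j := by positivity
      have h1 : (Nat.factorial j : ℝ) ≤ 2 * (Real.sqrt (2*j) * ((j:ℝ)/Real.exp 1)^j) := by
        have := hst
        rw [Stirling.stirlingSeq, div_le_iff₀ hden] at this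
        linarith
      have h2 : Real.sqrt (2*(j:ℝ)) ≤ 2*(j:ℝ) := by
        have h2a := Real.sqrt_le_sqrt (show (2*(j:ℝ)) ≤ (2*(j:ℝ))^2 by nlinarith)
        rwa [Real.sqrt_sq (by positivity)] at h2a
      have h3 : 0 < ((j:ℝ)/Real.exp 1)^j := by positivity
      calc (Nat.factorial j : ℝ) ≤ 2 * (Real.sqrt (2*j) * ((j:ℝ)/Real.exp 1)^j) := h1
        _ ≤ 2 * ((2*j) * ((j:ℝ)/Real.exp 1)^j) := by nlinarith
        _ = 4 * j * ((j:ℝ)/Real.exp 1)^j := by ring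
    -- core
    have hexp : Real.exp (B*↑j - c) = (Real.exp B)^j * Real.exp (-c) := by
      rw [show B*(j:ℝ) - c = (j:ℝ)*B + (-c) by ring, Real.exp_add, Real.exp_nat_mul]
    have key : (B*↑j - c)^j * Real.exp (B*↑j - c) / (((j:ℝ)/Real.exp 1)^j)
        = (B*Real.exp (1+B))^j * (1 - (c/B)/↑j)^j * Real.exp (-c) := by
      have hb : (((j:ℝ)/Real.exp 1)^j) ≠ 0 := by positivity
      rw [hexp, div_eq_iff hb]
      have e1 : (B*↑j - c)^j * (Real.exp B ^ j * Real.exp (-c))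
          = ((B*↑j - c) * Real.exp B)^j * Real.exp (-c) := by rw [mul_pow]; ring
      have e2 : (B*Real.exp (1+B))^j * (1 - c/B/↑j)^j * Real.exp (-c) * (((j:ℝ)/Real.exp 1)^j)
          = ((B*Real.exp (1+B)) * (1 - c/B/↑j) * ((j:ℝ)/Real.exp 1))^j * Real.exp (-c) := by
        conv_rhs => rw [mul_pow, mul_pow]
        ring
      have e3 : (B*↑j - c) * Real.exp B = (B*Real.exp (1+B)) * (1 - c/B/↑j) * ((j:ℝ)/Real.exp 1) := by
        rw [Real.exp_add]
        field_simp
      rw [e1, e2, e3]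
    have hcore : (L/2) * Real.exp (-c) ≤ (B*↑j - c)^j * Real.exp (B*↑j - c) / (((j:ℝ)/Real.exp 1)^j) := by
      rw [key]
      have h1 : (1:ℝ) ≤ (B*Real.exp (1+B))^j := one_le_pow₀ hq1
      have h2 : L/2 ≤ (1 - (c/B)/↑j)^j := hLj.le
      have hCpos : (0:ℝ) < (1 - (c/B)/↑j)^j := lt_of_lt_of_le (by positivity) h2
      have h3 : L/2 ≤ (B*Real.exp (1+B))^j * (1 - (c/B)/↑j)^j :=
        le_trans h2 (le_mul_of_one_le_left hCpos.le h1)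
      have := mul_le_mul_of_nonneg_right h3 (Real.exp_pos (-c)).le
      linarith
    -- assemble
    have hterm_abs : |(a + β*j)^(j+m) * Real.exp (-(a+β*j)) / Nat.factorial j|
        = (B*↑j - a)^(j+m) * Real.exp (-(a+β*j)) / Nat.factorial j := by
      rw [abs_div, abs_mul, abs_pow, habsx, abs_of_pos (Real.exp_pos _),
        Nat.abs_cast]
    rw [hterm_abs]
    have hnum1 : (B*↑j - c)^j ≤ (B*↑j - c)^(j+m) :=
      pow_le_pow_right₀ (by linarith) (by omega)
    have hnum2 : (B*↑j - c)^(j+m) ≤ (B*↑j - a)^(j+m) :=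
      pow_le_pow_left₀ (by linarith) (by linarith) _
    have hexp2 : Real.exp (B*↑j - c) ≤ Real.exp (-(a+β*j)) := by
      apply Real.exp_le_exp.2
      have : -(a + β*j) = B*↑j - a := by rw [hBdef]; ring
      rw [this]; linarith
    have hfpos : (0:ℝ) < Nat.factorial j := by exact_mod_cast Nat.factorial_pos j
    calc K / ↑j = ((L/2) * Real.exp (-c)) / (4*↑j) := by rw [hKdef]; field_simp; ring
      _ ≤ ((B*↑j - c)^j * Real.exp (B*↑j - c) / (((j:ℝ)/Real.exp 1)^j)) / (4*↑j) := by
          apply div_le_div_of_nonneg_right hcore (by linarith) |>.trans_eq rfl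
      _ = (B*↑j - c)^j * Real.exp (B*↑j - c) / (4*↑j*(((j:ℝ)/Real.exp 1)^j)) := by
          rw [div_div]; ring_nf
      _ ≤ (B*↑j - a)^(j+m) * Real.exp (-(a+β*j)) / (Nat.factorial j) := by
          have hba : (0:ℝ) ≤ B*↑j - a := by linarith
          apply div_le_div₀ (mul_nonneg (pow_nonneg hba _) (Real.exp_pos _).le) ?_ hfpos hfact
          calc (B*↑j - c)^j * Real.exp (B*↑j - c) ≤ (B*↑j - c)^(j+m) * Real.exp (B*↑j - c) := by
                apply mul_le_mul_of_nonneg_right (hnum1) (Real.exp_pos _).le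
            _ ≤ (B*↑j - a)^(j+m) * Real.exp (-(a+β*j)) := by
                apply mul_le_mul hnum2 hexp2 (Real.exp_pos _).le (pow_nonneg (by linarith) _)
  -- contradiction
  have hS2 : Summable (fun j : ℕ => |(a + β*(j+N))^((j+N)+m) * Real.exp (-(a+β*(j+N))) / Nat.factorial (j+N)|) := by
    exact_mod_cast (summable_nat_add_iff N).2 habs
  have hS3 : Summable (fun j : ℕ => K / ((j:ℝ)+N)) := by
    apply Summable.of_nonneg_of_le (fun j => by positivity) (fun j => ?_) hS2
    have := hlow (j+N) (by omega)
    convert this using 2 <;> push_cast <;> ring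
  have hS4 : Summable (fun j : ℕ => K * (1/(j:ℝ))) := by
    rw [← summable_nat_add_iff N]
    refine hS3.congr fun j => ?_
    push_cast
    ring
  have hS5 : Summable (fun j : ℕ => 1/(j:ℝ)) := by
    have := hS4.mul_left (1/K)
    refine this.congr fun j => ?_
    rw [← mul_assoc, one_div_mul_cancel hK.ne', one_mul]
  exact Real.not_summable_one_div_natCast hS5

lemma sumM {q : ℝ} (h1 : ‖q‖ < 1) (r : ℕ) (A B : ℝ) :
    Summable (fun n : ℕ => (A + B*n)^r * q^n) := by
  have heq : ∀ n : ℕ, (A + B*(n:ℝ))^r * q^n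
      = ∑ i ∈ Finset.range (r+1), (A^i * B^(r-i) * (r.choose i)) * ((n:ℝ)^(r-i) * q^n) := by
    intro n
    rw [add_pow, Finset.sum_mul]
    refine Finset.sum_congr rfl fun i _ => ?_
    rw [mul_pow]
    ring
  refine Summable.congr ?_ (fun n => (heq n).symm)
  exact summable_sum fun i _ =>
    ((summable_pow_mul_geometric_of_norm_lt_one (r-i) h1).mul_left _)

def eKJ : (Σ n : ℕ, Fin (n+1)) ≃ ℕ × ℕ where
  toFun x := ((x.2 : ℕ), x.1 - (x.2 : ℕ))
  invFun p := ⟨p.1 + p.2, ⟨p.1, by omega⟩⟩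
  left_inv x := by
    obtain ⟨n, k⟩ := x
    have hk : (k : ℕ) ≤ n := Nat.lt_succ_iff.1 k.isLt
    have h1 : (k : ℕ) + (n - (k:ℕ)) = n := by omega
    refine Sigma.ext (by simpa using h1) ((Fin.heq_ext_iff (by simpa using h1)).2 ?_)
    simp
  right_inv p := by
    obtain ⟨k, j⟩ := p
    simp only
    refine Prod.ext rfl ?_
    simp

theorem stmt2 (α β : ℝ) (hα : 0 < α) (hβ : |β| < 1) (r : ℕ) (hr : 1 ≤ r) :
    S r α β = ∑' k : ℕ, β ^ k * (α + k * β) * S (r - 1) (α + k * β) β := by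
  rcases eq_or_ne β 0 with hb0 | hb0
  · -- β = 0 case
    subst hb0
    rw [tsum_eq_single 0 (by intro k hk; simp [zero_pow hk])]
    simp only [pow_zero, one_mul, Nat.cast_zero, zero_mul, mul_zero, add_zero]
    unfold S
    simp only [zero_mul, add_zero]
    rw [← tsum_mul_left]
    refine tsum_congr fun k => ?_
    rw [show k + r = (k + (r-1)) + 1 by omega, pow_succ]
    ring
  rcases lt_or_ge (|β| * Real.exp (1 - β)) 1 with hq1 | hq1
  · -- convergent case
    set A : ℝ := |α| with hA
    set B : ℝ := |β| with hB
    have hBpos : 0 < B := abs_pos.2 hb0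
    have hApos : 0 ≤ A := abs_nonneg α
    set q : ℝ := B * Real.exp (1 - β) with hq
    have hq0 : 0 ≤ q := by positivity
    set G : ℕ → ℕ → ℝ := fun n k =>
      β^k * (α + k*β) * (α + β*n)^((n-k) + (r-1)) * Real.exp (-(α + β*n)) / (Nat.factorial (n-k))
      with hG
    set f : ℕ × ℕ → ℝ := fun p =>
      β^p.1 * (α + p.1*β) * ((α + p.1*β) + β*p.2)^(p.2 + (r-1))
        * Real.exp (-((α + p.1*β) + β*p.2)) / (Nat.factorial p.2) with hf
    have hfe : ∀ x : Σ n : ℕ, Fin (n+1), f (eKJ x) = G x.1 (x.2 : ℕ) := by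
      rintro ⟨n, k⟩
      have hk : (k : ℕ) ≤ n := Nat.lt_succ_iff.1 k.isLt
      have hc : ((n - (k:ℕ) : ℕ) : ℝ) = (n:ℝ) - (k:ℕ) := by
        rw [Nat.cast_sub hk]
      simp only [hf, hG, eKJ, Equiv.coe_fn_mk]
      rw [hc]
      rw [show (α + ((k:ℕ):ℝ) * β) + β * (((n:ℕ):ℝ) - ((k:ℕ):ℝ)) = α + β * n by ring]
    -- the summable bound
    have hGb : ∀ n : ℕ, ∑ k ∈ Finset.range (n+1), |G n k|
        ≤ (Real.exp (-α) * Real.exp (A/B)) * ((A + B*n)^r * q^n) := by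
      intro n
      have hy : 0 ≤ A + B*n := by positivity
      have step1 : ∀ k ∈ Finset.range (n+1), |G n k|
          ≤ ((A + B*n)^(r-1) * (A + B*n) * Real.exp (-(α + β*n)))
            * (B^k * (A + B*n)^(n-k) / (Nat.factorial (n-k))) := by
        intro k hk
        rw [Finset.mem_range, Nat.lt_succ_iff] at hk
        have h1 : |α + (k:ℝ)*β| ≤ A + B*n := by
          calc |α + (k:ℝ)*β| ≤ |α| + |(k:ℝ)*β| := abs_add_le _ _
            _ = A + (k:ℝ)*B := by rw [abs_mul, Nat.abs_cast]
            _ ≤ A + B*n := by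
                have : (k:ℝ) ≤ n := by exact_mod_cast hk
                nlinarith
        have h2 : |α + β*(n:ℝ)| ≤ A + B*n := by
          calc |α + β*(n:ℝ)| ≤ |α| + |β*(n:ℝ)| := abs_add_le _ _
            _ = A + B*n := by rw [abs_mul, Nat.abs_cast]
        have hfp : (0:ℝ) < (Nat.factorial (n-k) : ℝ) := by
          exact_mod_cast Nat.factorial_pos (n-k)
        rw [hG]
        simp only
        rw [abs_div, abs_mul, abs_mul, abs_mul, abs_pow, abs_pow,
          abs_of_pos (Real.exp_pos _), Nat.abs_cast]
        rw [div_le_iff₀ hfp]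
        have hBk : |β|^k = B^k := rfl
        calc |β|^k * |α + ↑k*β| * |α + β*↑n|^((n-k)+(r-1)) * Real.exp (-(α+β*↑n))
            ≤ B^k * (A+B*n) * (A+B*n)^((n-k)+(r-1)) * Real.exp (-(α+β*↑n)) := by
              rw [hBk]
              have := pow_le_pow_left₀ (abs_nonneg _) h2 ((n-k)+(r-1))
              have hb1 : (0:ℝ) ≤ B^k := by positivity
              have hb2 : (0:ℝ) ≤ |α + β*↑n|^((n-k)+(r-1)) := by positivity
              apply mul_le_mul_of_nonneg_right _ (Real.exp_pos _).le
              apply mul_le_mul (mul_le_mul_of_nonneg_left h1 hb1) this hb2 (by positivity)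
          _ = ((A + B*n)^(r-1) * (A + B*n) * Real.exp (-(α + β*n)))
              * (B^k * (A + B*n)^(n-k)) := by
              rw [pow_add]
              ring
          _ ≤ ((A + B*n)^(r-1) * (A + B*n) * Real.exp (-(α + β*n)))
              * (B^k * (A + B*n)^(n-k) / ↑(n-k).factorial) * ↑(n-k).factorial := by
              apply le_of_eq
              field_simp
      have step2 : ∑ k ∈ Finset.range (n+1), B^k * (A + B*n)^(n-k) / (Nat.factorial (n-k))
          ≤ B^n * Real.exp ((A + B*n)/B) := by
        have hrefl := Finset.sum_range_reflect
          (fun k => B^k * (A + B*n)^(n-k) / (Nat.factorial (n-k))) (n+1)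
        rw [← hrefl]
        have heq2 : ∀ j ∈ Finset.range (n+1),
            B^(n+1-1-j) * (A + B*n)^(n-(n+1-1-j)) / (Nat.factorial (n-(n+1-1-j)))
            = B^n * (((A + B*n)/B)^j / (Nat.factorial j)) := by
          intro j hj
          rw [Finset.mem_range, Nat.lt_succ_iff] at hj
          have e1 : n+1-1-j = n - j := by omega
          have e2 : n - (n-j) = j := by omega
          rw [e1, e2, pow_sub₀ B (ne_of_gt hBpos) hj, div_pow]
          field_simp
        rw [Finset.sum_congr rfl heq2, ← Finset.mul_sum]
        have := Real.sum_le_exp_of_nonneg (by positivity : (0:ℝ) ≤ (A+B*n)/B) (n+1)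
        have hBn : (0:ℝ) ≤ B^n := by positivity
        exact mul_le_mul_of_nonneg_left this hBn
      calc ∑ k ∈ Finset.range (n+1), |G n k|
          ≤ ∑ k ∈ Finset.range (n+1), ((A + B*n)^(r-1) * (A + B*n) * Real.exp (-(α + β*n)))
            * (B^k * (A + B*n)^(n-k) / (Nat.factorial (n-k))) :=
            Finset.sum_le_sum step1
        _ = ((A + B*n)^(r-1) * (A + B*n) * Real.exp (-(α + β*n)))
            * ∑ k ∈ Finset.range (n+1), B^k * (A + B*n)^(n-k) / (Nat.factorial (n-k)) := by
            rw [Finset.mul_sum]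
        _ ≤ ((A + B*n)^(r-1) * (A + B*n) * Real.exp (-(α + β*n)))
            * (B^n * Real.exp ((A + B*n)/B)) := by
            apply mul_le_mul_of_nonneg_left step2 (by positivity)
        _ = (Real.exp (-α) * Real.exp (A/B)) * ((A + B*n)^r * q^n) := by
            rw [show (A + B*(n:ℝ))/B = A/B + n by
                rw [add_div, mul_div_cancel_left₀ _ (ne_of_gt hBpos)],
              show -(α + β*(n:ℝ)) = -α + (-β)*n by ring,
              Real.exp_add, Real.exp_add,
              show Real.exp ((-β)*(n:ℝ)) = Real.exp (-β)^n by
                rw [show (-β)*(n:ℝ) = (n:ℝ)*(-β) by ring, Real.exp_nat_mul],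
              show Real.exp ((n:ℝ)) = Real.exp 1^n by
                rw [show ((n:ℝ)) = (n:ℝ)*1 by ring, Real.exp_nat_mul],
              hq, show (A+B*n)^r = (A+B*n)^(r-1) * (A+B*n) by
                rw [← pow_succ, show r - 1 + 1 = r by omega]]
            rw [show B * Real.exp (1-β) = B * (Real.exp 1 * Real.exp (-β)) by
                rw [← Real.exp_add]; ring_nf]
            rw [mul_pow, mul_pow]
            ring
    have hqlt : ‖q‖ < 1 := by rwa [Real.norm_eq_abs, abs_of_nonneg hq0]
    have hMsum : Summable (fun n : ℕ => (Real.exp (-α) * Real.exp (A/B)) * ((A + B*n)^r * q^n)) :=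
      (sumM hqlt r A B).mul_left _
    have habs : Summable (fun x : Σ n : ℕ, Fin (n+1) => |G x.1 (x.2 : ℕ)|) := by
      refine (summable_sigma_of_nonneg (fun x => abs_nonneg _)).2 ⟨fun n => Summable.of_finite, ?_⟩
      refine Summable.of_nonneg_of_le (fun n => tsum_nonneg (fun k => abs_nonneg _))
        (fun n => ?_) hMsum
      rw [tsum_fintype]
      calc ∑ k : Fin (n+1), |G n (k:ℕ)| = ∑ k ∈ Finset.range (n+1), |G n k| :=
            Fin.sum_univ_eq_sum_range (fun k => |G n k|) (n+1)
        _ ≤ _ := hGb n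
    have hFsum : Summable (fun x : Σ n : ℕ, Fin (n+1) => G x.1 (x.2 : ℕ)) :=
      summable_abs_iff.1 habs
    have hfsum : Summable f := by
      rw [← eKJ.summable_iff]
      exact hFsum.congr (fun x => (hfe x).symm)
    -- LHS
    have hLHS : S r α β = ∑' x : Σ n : ℕ, Fin (n+1), G x.1 (x.2 : ℕ) := by
      rw [Summable.tsum_sigma hFsum]
      unfold S
      refine tsum_congr fun n => ?_
      rw [tsum_fintype, Fin.sum_univ_eq_sum_range (fun k => G n k) (n+1)]
      have hsplit : ∀ k ∈ Finset.range (n+1), G n k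
          = (β^k * (α + k*β) * (α + n*β)^(n-k) / (Nat.factorial (n-k)))
            * ((α + β*n)^(r-1) * Real.exp (-(α + β*n))) := by
        intro k _
        rw [hG]
        simp only
        rw [pow_add, show α + (n:ℝ)*β = α + β*n by ring]
        ring
      rw [Finset.sum_congr rfl hsplit, ← Finset.sum_mul, tele α β n]
      rw [show α + (n:ℝ)*β = α + β*n by ring]
      rw [show n + r = (n+1) + (r-1) by omega, pow_add]
      ring
    rw [hLHS, ← tsum_congr hfe, Equiv.tsum_eq eKJ f, Summable.tsum_prod' hfsum hfsum.prod_factor]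
    refine tsum_congr fun k => ?_
    have : ∀ j : ℕ, f (k, j) = (β^k * (α + k*β))
        * (((α + k*β) + β*j)^(j + (r-1)) * Real.exp (-((α + k*β) + β*j)) / (Nat.factorial j)) := by
      intro j
      rw [hf]
      simp only
      ring
    rw [tsum_congr this, tsum_mul_left]
    unfold S
    refine congrArg _ (tsum_congr fun j => ?_)
    ring
  · -- divergent case
    have hβneg : β < 0 := by
      rcases lt_trichotomy β 0 with h | h | h
      · exact h
      · exact absurd h hb0
      · exfalso
        have habs : |β| = β := abs_of_pos h
        have hlt1 : β < 1 := lt_of_abs_lt hβ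
        have h2 : β * Real.exp (1-β) = Real.exp (Real.log β + (1-β)) := by
          rw [Real.exp_add, Real.exp_log h]
        have hlog := Real.log_lt_sub_one_of_pos h (ne_of_lt hlt1)
        have h3 : β * Real.exp (1-β) < 1 := by
          rw [h2]
          have h4 := Real.exp_lt_exp.2 (show Real.log β + (1-β) < 0 by linarith)
          simpa using h4
        rw [habs] at hq1
        linarith
    have hq' : 1 ≤ (-β) * Real.exp (1-β) := by rwa [abs_of_neg hβneg] at hq1
    have hL : S r α β = 0 := by
      unfold S
      exact tsum_eq_zero_of_not_summable (notSummable hβneg hq' α r)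
    rw [hL]
    symm
    have hz : ∀ k : ℕ, β ^ k * (α + k * β) * S (r - 1) (α + k * β) β = 0 := by
      intro k
      have : S (r-1) (α + k*β) β = 0 := by
        unfold S
        exact tsum_eq_zero_of_not_summable (notSummable hβneg hq' _ _)
      rw [this, mul_zero]
    rw [tsum_congr hz]
    exact tsum_zero
end
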